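/- Let T be a streamlined κ-tree and suppose ⟨b^α : α ∈ R⟩ are nodes with b^α ∈ T_α, such that R ⊆ κ is cofinal, otp((b^α)⁻¹(0)) = ω for all α ∈ R, (b^α)⁻¹(0) is club in α, and for each α ∈ R the only extension of b^α in T_{α+1} is b^α⌢⟨0⟩. Then {b^α : α ∈ R} is an antichain of T of size κ; in particular T is not κ-Souslin. -/

import Mathlib

noncomputable section
open Cardinal Set

/-- A node of a streamlined tree: a partial function from ordinals to `ℕ`,
encoded as an `Option ℕ`-valued function; its domain is meant to be an ordinal. -/
abbrev ONode : Type 1 := Ordinal → Option ℕ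

/-- `t` has domain exactly the ordinal `α`. -/
def nodeDom (t : ONode) (α : Ordinal) : Prop := ∀ γ, (t γ).isSome ↔ γ < α

/-- The restriction `t ↾ β`. -/
def nrestrict (t : ONode) (β : Ordinal) : ONode := fun γ => if γ < β then t γ else none

/-- `nExt t s` says that `s` extends `t`, i.e. `t ⊆ s` as functions. -/
def nExt (t s : ONode) : Prop := ∀ γ, (t γ).isSome → s γ = t γ

/-- Incompatibility of two nodes in the tree order `⊆`. -/
def nIncomp (s t : ONode) : Prop := ¬ nExt s t ∧ ¬ nExt t s

/-- The `α`-th level of `T`. -/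
def levelSet (T : Set ONode) (α : Ordinal) : Set ONode := {t ∈ T | nodeDom t α}

/-- `T ⊆ {}^{<κ}ω` is a streamlined `κ`-tree. -/
structure IsStreamTree (κ : Cardinal.{0}) (T : Set ONode) : Prop where
  hdom : ∀ t ∈ T, ∃ α < κ.ord, nodeDom t α
  down : ∀ t ∈ T, ∀ β, nrestrict t β ∈ T
  level_ne : ∀ α < κ.ord, (levelSet T α).Nonempty
  level_small : ∀ α < κ.ord, Cardinal.mk ↥(levelSet T α) < Cardinal.lift.{1} κ

/-- The lexicographic (strict) order on nodes: `s <_lex t` iff `s ⊊ t`, or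
`s(Δ) < t(Δ)` at the least point `Δ` of disagreement. -/
def lexLT (s t : ONode) : Prop :=
  (nExt s t ∧ s ≠ t) ∨
  ∃ Δ m n, (∀ γ < Δ, s γ = t γ) ∧ s Δ = some m ∧ t Δ = some n ∧ m < n

/-- `T` has a chain (branch) of size `κ`. -/
def HasKappaBranch (κ : Cardinal.{0}) (T : Set ONode) : Prop :=
  ∃ B ⊆ T, (∀ s ∈ B, ∀ t ∈ B, nExt s t ∨ nExt t s) ∧
    Cardinal.lift.{1} κ ≤ Cardinal.mk ↥B

/-- A `ϱ`-modification: a finitely supported integer correction term, whose support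
is a finite set of non-limit ordinals below `κ` containing `0`. -/
structure RhoMod (κ : Cardinal.{0}) where
  x : Finset Ordinal
  zero_mem : (0 : Ordinal) ∈ x
  mem_nacc : ∀ β ∈ x, β < κ.ord ∧ ¬ Order.IsSuccLimit β
  f : Ordinal → ℤ

/-- `max (dom η ∩ (β+1))`: the largest point of the support of `η` that is `≤ β`. -/
def RhoMod.anchor {κ : Cardinal.{0}} (η : RhoMod κ) (β : Ordinal) : Ordinal :=
  (η.x.filter (· ≤ β)).max' ⟨0, Finset.mem_filter.2 ⟨η.zero_mem, zero_le⟩⟩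

/-- `η * τ` is everywhere defined (takes values in `ω`). -/
def rhoDefined {κ : Cardinal.{0}} (η : RhoMod κ) (t : ONode) : Prop :=
  ∀ γ n, t γ = some n → 0 ≤ η.f (η.anchor γ) + (n : ℤ)

/-- The action `η * t` of a `ϱ`-modification on a node. -/
def rhoAct {κ : Cardinal.{0}} (η : RhoMod κ) (t : ONode) : ONode :=
  fun γ => (t γ).map fun n => (η.f (η.anchor γ) + (n : ℤ)).toNat

/-- `T` is `ϱ`-uniform: closed under all (defined) `ϱ`-modifications. -/
def RhoUniform (κ : Cardinal.{0}) (T : Set ONode) : Prop :=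
  ∀ t ∈ T, ∀ η : RhoMod κ, rhoDefined η t → rhoAct η t ∈ T

/-- `T` is `ϱ`-coherent: any two nodes on a common level are `ϱ`-modifications of each other. -/
def RhoCoherent (κ : Cardinal.{0}) (T : Set ONode) : Prop :=
  ∀ α < κ.ord, ∀ s ∈ levelSet T α, ∀ t ∈ levelSet T α,
    ∃ η : RhoMod κ, rhoDefined η t ∧ rhoAct η t = s

/-- The cone `T_{[s]}`. -/
def cone (T : Set ONode) (s : ONode) : Set ONode := {t ∈ T | nExt t s ∨ nExt s t}

/-- The frozen cone `T_{[s,i]}`. -/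
def frozenCone (T : Set ONode) (s : ONode) (i : ℕ) : Set ONode :=
  {t ∈ T | nExt t s ∨ (nExt s t ∧ ∀ ξ n, ¬ (s ξ).isSome → t ξ = some n → i ≤ n)}

/-- `acc(C)`: the accumulation points of `C` belonging to `C`. -/
def accOf (C : Set Ordinal) : Set Ordinal := {β ∈ C | 0 < β ∧ sSup (C ∩ Set.Iio β) = β}

/-- `nacc(C) = C \ acc(C)`. -/
def naccOf (C : Set Ordinal) : Set Ordinal := C \ accOf C

/-- `C` is a club (closed unbounded) subset of `α`. -/
def ClubIn (C : Set Ordinal) (α : Ordinal) : Prop :=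
  C ⊆ Set.Iio α ∧ (∀ β < α, ∃ γ ∈ C, β ≤ γ) ∧
    ∀ β < α, 0 < β → sSup (C ∩ Set.Iio β) = β → β ∈ C

/-- `S` is stationary in `α`. -/
def StatIn (S : Set Ordinal) (α : Ordinal) : Prop :=
  ∀ D, ClubIn D α → (S ∩ D).Nonempty

/-! If `b^β` extended `b^α` for `α < β`, then `b^β ↾ (α + 1)` would be the unique successor
`b^α⌢⟨0⟩` of `b^α`, so the zero set of `b^β` would contain the zero set of `b^α` together with `α`,
which lies above it. A set of order type `ω` has no such proper end-extension of order type `ω`.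
Thus the `b^α` form an antichain indexed by `R`, which has size `κ` as a cofinal subset of the
regular cardinal `κ`. -/

theorem not_range_subset_of_strictMono {α : Type*} [LinearOrder α] {f g : ℕ → α}
    (hf : StrictMono f) (hg : StrictMono g) {k : ℕ} (hk : ∀ n, f n < g k) :
    ¬ range f ⊆ range g := fun hfg => by
  have : range f ⊆ g '' Iio k := by
    rintro _ ⟨n, rfl⟩
    obtain ⟨m, hm⟩ := hfg ⟨n, rfl⟩
    exact ⟨m, hg.lt_iff_lt.mp (hm ▸ hk n), hm⟩
  exact infinite_range_of_injective hf.injective (((finite_Iio k).image g).subset this)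

theorem Cardinal.mk_eq_of_isCofinal_Iio_ord {κ : Cardinal.{0}} (hκ : κ.IsRegular)
    {R : Set Ordinal} (hRsub : R ⊆ Iio κ.ord) (hRcof : ∀ β < κ.ord, ∃ α ∈ R, β ≤ α) :
    #R = lift.{1} κ := by
  refine le_antisymm ?_ ?_
  · simpa using mk_le_mk_of_subset hRsub
  · have hcof : IsCofinal (Subtype.val ⁻¹' R : Set (Iio κ.ord)) := fun β =>
      let ⟨α, hαR, hβα⟩ := hRcof β β.2
      ⟨⟨α, hRsub hαR⟩, hαR, hβα⟩
    have := Order.cof_le hcof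
    rwa [Ordinal.cof_Iio, ← Ordinal.lift_cof, hκ.cof_ord, mk_preimage_of_injective_of_subset_range
      _ _ Subtype.val_injective (by rwa [Subtype.range_coe])] at this

section Nodes

variable {s t : ONode} {α β γ : Ordinal}

theorem nodeDom.lt_of_isSome (ht : nodeDom t α) (hγ : (t γ).isSome) : γ < α :=
  (ht γ).mp hγ

theorem nodeDom_nrestrict (ht : nodeDom t β) (hαβ : α ≤ β) : nodeDom (nrestrict t α) α := by
  intro γ
  unfold nrestrict
  split_ifs with hγ
  · exact iff_of_true ((ht γ).mpr (hγ.trans_le hαβ)) hγ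
  · simpa using hγ

theorem nExt.nrestrict (hst : nExt s t) (hs : nodeDom s α) (hαγ : α ≤ γ) :
    nExt s (nrestrict t γ) := fun δ hδ => by
  rw [_root_.nrestrict, if_pos ((hs.lt_of_isSome hδ).trans_le hαγ), hst δ hδ]

theorem not_nExt_of_nodeDom_lt (hs : nodeDom s α) (ht : nodeDom t β) (hβα : β < α) :
    ¬ nExt s t := fun hst =>
  have hβ : (s β).isSome := (hs β).mpr hβα
  (ht.lt_of_isSome (hst β hβ ▸ hβ)).false

theorem nExt.zeroSet_subset (hst : nExt s t) : {γ | s γ = some 0} ⊆ {γ | t γ = some 0} :=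
  fun γ (hγ : s γ = some 0) => (hst γ (by simp [hγ])).trans hγ

theorem apply_eq_of_forall_succ_eq {T : Set ONode} (hT : ∀ t ∈ T, ∀ β, nrestrict t β ∈ T)
    {u : ONode} (hs : nodeDom s α)
    (hsucc : ∀ t ∈ T, nodeDom t (α + 1) → nExt s t → t = u)
    (htT : t ∈ T) (ht : nodeDom t β) (hαβ : α < β) (hst : nExt s t) : t α = u α := by
  have hα : α < α + 1 := Order.lt_add_one_iff.mpr le_rfl
  have hu := hsucc _ (hT t htT (α + 1)) (nodeDom_nrestrict ht (Order.add_one_le_of_lt hαβ))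
    (hst.nrestrict hs hα.le)
  rw [← hu, nrestrict, if_pos hα]

theorem not_nExt_of_zeroSet_eq_range (hs : nodeDom s α) (htα : t α = some 0)
    {f g : ℕ → Ordinal} (hf : StrictMono f) (hfs : range f = {γ | s γ = some 0})
    (hg : StrictMono g) (hgt : range g = {γ | t γ = some 0}) : ¬ nExt s t := fun hst => by
  obtain ⟨k, hk⟩ : α ∈ range g := hgt ▸ htα
  have hfα : ∀ n, f n < g k := fun n => by
    have : f n ∈ {γ | s γ = some 0} := hfs ▸ mem_range_self n
    exact hk ▸ hs.lt_of_isSome (by simp [show s (f n) = some 0 from this])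
  exact not_range_subset_of_strictMono hf hg hfα (hfs ▸ hgt ▸ hst.zeroSet_subset)

end Nodes

theorem stmt13_general (κ : Cardinal.{0}) (hreg : κ.IsRegular)
    (T : Set ONode) (hT : IsStreamTree κ T)
    (R : Set Ordinal) (hRsub : R ⊆ Set.Iio κ.ord) (hRcof : ∀ β < κ.ord, ∃ α ∈ R, β ≤ α)
    (b : Ordinal → ONode)
    (hbT : ∀ α ∈ R, b α ∈ T ∧ nodeDom (b α) α)
    (hotp : ∀ α ∈ R, ∃ f : ℕ → Ordinal, StrictMono f ∧ Set.range f = {γ | b α γ = some 0})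
    (hext : ∀ α ∈ R, ∀ t ∈ T, nodeDom t (α + 1) → nExt (b α) t →
      t = fun γ => if γ = α then some 0 else b α γ) :
    (∀ α ∈ R, ∀ β ∈ R, α ≠ β → nIncomp (b α) (b β)) ∧
    Cardinal.mk ↥(b '' R) = Cardinal.lift.{1} κ := by
  have incomp_of_lt : ∀ α ∈ R, ∀ β ∈ R, α < β → nIncomp (b α) (b β) := by
    intro α hα β hβ hαβ
    refine ⟨fun hext_αβ => ?_, not_nExt_of_nodeDom_lt (hbT β hβ).2 (hbT α hα).2 hαβ⟩
    have hzero : b β α = some 0 := by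
      simpa using apply_eq_of_forall_succ_eq hT.down (hbT α hα).2 (hext α hα)
        (hbT β hβ).1 (hbT β hβ).2 hαβ hext_αβ
    obtain ⟨f, hf, hfr⟩ := hotp α hα
    obtain ⟨g, hg, hgr⟩ := hotp β hβ
    exact not_nExt_of_zeroSet_eq_range (hbT α hα).2 hzero hf hfr hg hgr hext_αβ
  have antichain : ∀ α ∈ R, ∀ β ∈ R, α ≠ β → nIncomp (b α) (b β) := by
    intro α hα β hβ hne
    rcases hne.lt_or_gt with hlt | hlt
    · exact incomp_of_lt α hα β hβ hlt
    · exact (incomp_of_lt β hβ α hα hlt).symm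
  have hinj : InjOn b R := fun α hα β hβ hab => by_contra fun hne =>
    (antichain α hα β hβ hne).1 (hab ▸ fun _ _ => rfl)
  exact ⟨antichain, (mk_image_eq_of_injOn b R hinj).trans
    (mk_eq_of_isCofinal_Iio_ord hreg hRsub hRcof)⟩

/-- If `⟨b^α : α ∈ R⟩` picks, cofinally in `κ`, nodes whose zero-set is a club of order type
`ω` and whose unique successor appends `0`, then `{b^α : α ∈ R}` is an antichain of size `κ`;
in particular `T` is not `κ`-Souslin. -/
theorem stmt13 (κ : Cardinal.{0}) (hreg : κ.IsRegular) (hunc : Cardinal.aleph0 < κ)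
    (T : Set ONode) (hT : IsStreamTree κ T)
    (R : Set Ordinal) (hRsub : R ⊆ Set.Iio κ.ord) (hRcof : ∀ β < κ.ord, ∃ α ∈ R, β ≤ α)
    (b : Ordinal → ONode)
    (hbT : ∀ α ∈ R, b α ∈ T ∧ nodeDom (b α) α)
    (hotp : ∀ α ∈ R, ∃ f : ℕ → Ordinal, StrictMono f ∧ Set.range f = {γ | b α γ = some 0})
    (hclub : ∀ α ∈ R, ClubIn {γ | b α γ = some 0} α)
    (hext : ∀ α ∈ R, ∀ t ∈ T, nodeDom t (α + 1) → nExt (b α) t →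
      t = fun γ => if γ = α then some 0 else b α γ) :
    (∀ α ∈ R, ∀ β ∈ R, α ≠ β → nIncomp (b α) (b β)) ∧
    Cardinal.mk ↥(b '' R) = Cardinal.lift.{1} κ :=
  stmt13_general κ hreg T hT R hRsub hRcof b hbT hotp hext
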